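/- arXiv:2602.13413 — 2 statements merged into one kernel-verified Lean document; each statement's English description precedes it below -/
import Mathlib

section
/- (Scalar Burkholder-type inequality.) Let p ∈ (1,2] and let X_0, …, X_{T−1} be real-valued random variables adapted to a filtration such that E[X_k | X_0,…,X_{k−1}] = 0 and E[|X_k|^p] < ∞ for each k. Then E[|∑_{k=0}^{T−1} X_k|^p] ≤ 2^{2−p} · ∑_{k=0}^{T−1} E[|X_k|^p]. -/
/-!
For `1 < p ≤ 2` the derivative `p · sign x · |x| ^ (p - 1)` of `|x| ^ p` is `(p - 1)`-Hölder with
constant `p · 2 ^ (2 - p)`. Comparing `|a + t b| ^ p` with its first-order Taylor polynomial along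
`t ∈ [0, 1]` gives the pointwise bound
`|a + b| ^ p ≤ |a| ^ p + p · sign a · |a| ^ (p - 1) · b + 2 ^ (2 - p) · |b| ^ p`.
Take `a` the partial sum `S_k` and `b = X_k`: the middle term is an `S_k`-measurable function times
a martingale difference, so its expectation vanishes, and induction on `T` sums the bounds.
-/

open MeasureTheory
open scoped ENNReal NNReal

/-- `sign x * |x| ^ q`; the factor `|x| ^ (q - 1)` is junk at `x = 0`, where it is multiplied
by `0`. -/
noncomputable def signedRpow (q x : ℝ) : ℝ := |x| ^ (q - 1) * x

section SignedPower

variable {q : ℝ}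

lemma signedRpow_of_nonneg (hq : 0 < q) {x : ℝ} (hx : 0 ≤ x) : signedRpow q x = x ^ q := by
  rw [signedRpow, abs_of_nonneg hx, ← Real.rpow_add_one' hx (by linarith), sub_add_cancel]

lemma signedRpow_of_nonpos (hq : 0 < q) {x : ℝ} (hx : x ≤ 0) : signedRpow q x = -(-x) ^ q := by
  rw [signedRpow, abs_of_nonpos hx, ← neg_neg x, ← neg_mul_eq_mul_neg, neg_neg,
    ← Real.rpow_add_one' (neg_nonneg.2 hx) (by linarith), sub_add_cancel]

lemma abs_signedRpow (hq : 0 < q) (x : ℝ) : |signedRpow q x| = |x| ^ q := by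
  rcases le_total 0 x with hx | hx
  · rw [signedRpow_of_nonneg hq hx, abs_of_nonneg hx, abs_of_nonneg (by positivity)]
  · rw [signedRpow_of_nonpos hq hx, abs_neg, abs_of_nonpos hx,
      abs_of_nonneg (Real.rpow_nonneg (neg_nonneg.2 hx) q)]

lemma measurable_signedRpow (q : ℝ) : Measurable (signedRpow q) := by
  unfold signedRpow; fun_prop

lemma abs_rpow_sub_rpow_le (hq0 : 0 ≤ q) (hq1 : q ≤ 1) {s t : ℝ} (hs : 0 ≤ s) (ht : 0 ≤ t) :
    |s ^ q - t ^ q| ≤ |s - t| ^ q := by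
  wlog hts : t ≤ s generalizing s t
  · rw [abs_sub_comm, abs_sub_comm s]; exact this ht hs (by linarith)
  have hsub : s ^ q ≤ t ^ q + (s - t) ^ q := by
    simpa using Real.rpow_add_le_add_rpow ht (sub_nonneg.2 hts) hq0 hq1
  rw [abs_of_nonneg (sub_nonneg.2 (Real.rpow_le_rpow ht hts hq0)),
    abs_of_nonneg (sub_nonneg.2 hts)]
  linarith

lemma rpow_add_rpow_le_two_rpow_mul (hq0 : 0 ≤ q) (hq1 : q ≤ 1) {s t : ℝ} (hs : 0 ≤ s)
    (ht : 0 ≤ t) : s ^ q + t ^ q ≤ 2 ^ (1 - q) * (s + t) ^ q := by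
  have hmid := (Real.concaveOn_rpow hq0 hq1).2 hs ht (by norm_num : (0 : ℝ) ≤ 1 / 2)
    (by norm_num : (0 : ℝ) ≤ 1 / 2) (by norm_num)
  simp only [smul_eq_mul] at hmid
  calc s ^ q + t ^ q = 2 * (1 / 2 * s ^ q + 1 / 2 * t ^ q) := by ring
    _ ≤ 2 * ((s + t) / 2) ^ q := by
        gcongr
        exact hmid.trans_eq (by congr 1; ring)
    _ = 2 ^ (1 - q) * (s + t) ^ q := by
        rw [Real.div_rpow (by positivity) zero_le_two, Real.rpow_sub zero_lt_two, Real.rpow_one]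
        ring

lemma abs_signedRpow_sub_le (hq0 : 0 < q) (hq1 : q ≤ 1) (s t : ℝ) :
    |signedRpow q s - signedRpow q t| ≤ 2 ^ (1 - q) * |s - t| ^ q := by
  wlog hts : t ≤ s generalizing s t
  · rw [abs_sub_comm, abs_sub_comm s]; exact this t s (by linarith)
  have h2 : (1:ℝ) ≤ 2 ^ (1 - q) := Real.one_le_rpow one_le_two (by linarith)
  have h0 : 0 ≤ |s - t| ^ q := by positivity
  rcases le_total 0 t with ht | ht
  · have hs : 0 ≤ s := ht.trans hts
    rw [signedRpow_of_nonneg hq0 hs, signedRpow_of_nonneg hq0 ht]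
    nlinarith [abs_rpow_sub_rpow_le hq0.le hq1 hs ht]
  rcases le_total 0 s with hs | hs
  · have hst : s ^ q + (-t) ^ q ≤ 2 ^ (1 - q) * (s + -t) ^ q :=
      rpow_add_rpow_le_two_rpow_mul hq0.le hq1 hs (neg_nonneg.2 ht)
    rw [signedRpow_of_nonneg hq0 hs, signedRpow_of_nonpos hq0 ht, sub_neg_eq_add,
      abs_of_nonneg (add_nonneg (Real.rpow_nonneg hs q) (Real.rpow_nonneg (neg_nonneg.2 ht) q)),
      abs_of_nonneg (by linarith), sub_eq_add_neg]
    exact hst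
  · have hst := abs_rpow_sub_rpow_le hq0.le hq1 (neg_nonneg.2 ht) (neg_nonneg.2 hs)
    rw [neg_sub_neg] at hst
    rw [signedRpow_of_nonpos hq0 hs, signedRpow_of_nonpos hq0 ht, neg_sub_neg]
    nlinarith

end SignedPower

lemma hasDerivAt_abs_rpow_signedRpow {p : ℝ} (hp : 1 < p) (x : ℝ) :
    HasDerivAt (fun x => |x| ^ p) (p * signedRpow (p - 1) x) x := by
  convert hasDerivAt_abs_rpow x hp using 1
  rw [signedRpow, sub_sub, one_add_one_eq_two, mul_assoc]

lemma abs_mul_abs_mul_rpow_sub_one {p t : ℝ} (hp : 1 < p) (ht : 0 ≤ t) (b : ℝ) :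
    |b| * |t * b| ^ (p - 1) = t ^ (p - 1) * |b| ^ p := by
  rw [abs_mul, abs_of_nonneg ht, Real.mul_rpow ht (abs_nonneg b), mul_left_comm,
    ← Real.rpow_one_add' (abs_nonneg b) (by linarith), add_sub_cancel]

theorem abs_add_rpow_le {p : ℝ} (hp1 : 1 < p) (hp2 : p ≤ 2) (a b : ℝ) :
    |a + b| ^ p ≤ |a| ^ p + p * (signedRpow (p - 1) a * b) + 2 ^ (2 - p) * |b| ^ p := by
  set c := (2 : ℝ) ^ (2 - p) * |b| ^ p
  -- `g` vanishes at `0`, and `g 1 ≥ 0` is the claim.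
  set g : ℝ → ℝ := fun t =>
    |a| ^ p + p * (signedRpow (p - 1) a * b) * t + c * t ^ p - |a + t * b| ^ p
  set g' : ℝ → ℝ := fun t => p * (signedRpow (p - 1) a * b) + c * (p * t ^ (p - 1))
    - p * signedRpow (p - 1) (a + t * b) * b
  have hg : ∀ t, HasDerivAt g (g' t) t := by
    intro t
    have hlin : HasDerivAt (fun t => a + t * b) b t := by
      simpa using ((hasDerivAt_id t).mul_const b).const_add a
    have hpoly := ((hasDerivAt_id t).const_mul (p * (signedRpow (p - 1) a * b))).const_add
      (|a| ^ p) |>.add ((Real.hasDerivAt_rpow_const (Or.inr hp1.le)).const_mul c)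
    refine (hpoly.sub ((hasDerivAt_abs_rpow_signedRpow hp1 (a + t * b)).comp t hlin)).congr_deriv ?_
    ring
  have hg'_nonneg : ∀ t ∈ Set.Ioo (0 : ℝ) 1, 0 ≤ g' t := by
    rintro t ⟨ht, -⟩
    have hHolder := abs_signedRpow_sub_le (q := p - 1) (by linarith) (by linarith) (a + t * b) a
    rw [add_sub_cancel_left, show (1 : ℝ) - (p - 1) = 2 - p by ring] at hHolder
    have hincr : b * (signedRpow (p - 1) (a + t * b) - signedRpow (p - 1) a) ≤ c * t ^ (p - 1) :=
      calc b * (signedRpow (p - 1) (a + t * b) - signedRpow (p - 1) a)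
          ≤ |b| * |signedRpow (p - 1) (a + t * b) - signedRpow (p - 1) a| := by
            rw [← abs_mul]; exact le_abs_self _
        _ ≤ |b| * (2 ^ (2 - p) * |t * b| ^ (p - 1)) := by gcongr
        _ = c * t ^ (p - 1) := by
            rw [mul_left_comm, abs_mul_abs_mul_rpow_sub_one hp1 ht.le]; ring
    have hg't : g' t = p * (c * t ^ (p - 1)
        - b * (signedRpow (p - 1) (a + t * b) - signedRpow (p - 1) a)) := by
      simp only [g']; ring
    rw [hg't]
    exact mul_nonneg (by linarith) (sub_nonneg.2 hincr)
  have hmono : MonotoneOn g (Set.Icc 0 1) :=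
    monotoneOn_of_hasDerivWithinAt_nonneg (convex_Icc 0 1)
      (fun t _ => (hg t).continuousAt.continuousWithinAt) (fun t _ => (hg t).hasDerivWithinAt)
      (by simpa only [interior_Icc] using hg'_nonneg)
  have h01 := hmono (Set.left_mem_Icc.2 zero_le_one) (Set.right_mem_Icc.2 zero_le_one) zero_le_one
  simp only [g, zero_mul, add_zero, Real.zero_rpow (by linarith : p ≠ 0), mul_zero, sub_self,
    one_mul, Real.one_rpow, mul_one] at h01
  linarith

lemma rpow_sub_one_mul_le_rpow_add_rpow {p x y : ℝ} (hp : 1 ≤ p) (hx : 0 ≤ x) (hy : 0 ≤ y) :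
    x ^ (p - 1) * y ≤ x ^ p + y ^ p := by
  have hmul : ∀ z : ℝ, 0 ≤ z → z ^ (p - 1) * z = z ^ p := fun z hz => by
    rw [← Real.rpow_add_one' hz (by linarith), sub_add_cancel]
  rcases le_total y x with hyx | hxy
  · have hle := mul_le_mul_of_nonneg_left hyx (Real.rpow_nonneg hx (p - 1))
    linarith [hmul x hx, Real.rpow_nonneg hy p]
  · have hle := mul_le_mul_of_nonneg_right (Real.rpow_le_rpow (z := p - 1) hx hxy (by linarith)) hy
    linarith [hmul y hy, Real.rpow_nonneg hx p]

namespace MeasureTheory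

variable {Ω : Type*} {m m0 : MeasurableSpace Ω} {μ : Measure Ω}

lemma MemLp.integrable_abs_rpow {p : ℝ} (hp : 0 < p) {f : Ω → ℝ}
    (hf : MemLp f (ENNReal.ofReal p) μ) : Integrable (fun ω => |f ω| ^ p) μ := by
  simpa [ENNReal.toReal_ofReal hp.le] using
    hf.integrable_norm_rpow (by simpa using hp) ENNReal.ofReal_ne_top

lemma integral_mul_eq_zero_of_condExp_eq_zero (hm : m ≤ m0) [SigmaFinite (μ.trim hm)]
    {g Y : Ω → ℝ} (hg : StronglyMeasurable[m] g) (hgY : Integrable (g * Y) μ)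
    (hY : Integrable Y μ) (hY_cond : μ[Y | m] =ᵐ[μ] 0) :
    ∫ ω, g ω * Y ω ∂μ = 0 := by
  have hpull : μ[g * Y | m] =ᵐ[μ] 0 := by
    filter_upwards [condExp_mul_of_stronglyMeasurable_left hg hgY hY, hY_cond] with ω h h0
    simp [h, h0]
  calc ∫ ω, g ω * Y ω ∂μ = ∫ ω, (μ[g * Y | m]) ω ∂μ := (integral_condExp hm).symm
    _ = 0 := by simp [integral_congr_ae hpull]

theorem integral_abs_add_rpow_le [IsFiniteMeasure μ] (hm : m ≤ m0) {p : ℝ} (hp1 : 1 < p)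
    (hp2 : p ≤ 2) {S Y : Ω → ℝ} (hS_meas : StronglyMeasurable[m] S)
    (hS : MemLp S (ENNReal.ofReal p) μ) (hY : MemLp Y (ENNReal.ofReal p) μ)
    (hY_cond : μ[Y | m] =ᵐ[μ] 0) :
    ∫ ω, |S ω + Y ω| ^ p ∂μ ≤ ∫ ω, |S ω| ^ p ∂μ + 2 ^ (2 - p) * ∫ ω, |Y ω| ^ p ∂μ := by
  have hp0 : 0 < p := by linarith
  set g := fun ω => signedRpow (p - 1) (S ω)
  have hSp := hS.integrable_abs_rpow hp0
  have hYp := hY.integrable_abs_rpow hp0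
  have hgY : Integrable (fun ω => g ω * Y ω) μ := by
    refine Integrable.mono' (hSp.add hYp)
      (((measurable_signedRpow _).comp_aemeasurable hS.1.aemeasurable).aestronglyMeasurable.mul
        hY.1) (ae_of_all _ fun ω => ?_)
    rw [Real.norm_eq_abs, abs_mul, abs_signedRpow (by linarith)]
    exact rpow_sub_one_mul_le_rpow_add_rpow hp1.le (abs_nonneg _) (abs_nonneg _)
  have hSgY : Integrable (fun ω => |S ω| ^ p + p * (g ω * Y ω)) μ := hSp.add (hgY.const_mul p)
  have hcross : ∫ ω, g ω * Y ω ∂μ = 0 :=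
    integral_mul_eq_zero_of_condExp_eq_zero hm
      ((measurable_signedRpow _).comp hS_meas.measurable).stronglyMeasurable hgY
      (hY.integrable (by simpa using hp1.le)) hY_cond
  calc ∫ ω, |S ω + Y ω| ^ p ∂μ
      ≤ ∫ ω, |S ω| ^ p + p * (g ω * Y ω) + 2 ^ (2 - p) * |Y ω| ^ p ∂μ :=
        integral_mono ((hS.add hY).integrable_abs_rpow hp0)
          (hSgY.add (hYp.const_mul _))
          fun ω => abs_add_rpow_le hp1 hp2 (S ω) (Y ω)
    _ = ∫ ω, |S ω| ^ p ∂μ + 2 ^ (2 - p) * ∫ ω, |Y ω| ^ p ∂μ := by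
        rw [integral_add hSgY (hYp.const_mul _),
          integral_add hSp (hgY.const_mul p), integral_const_mul, integral_const_mul, hcross,
          mul_zero, add_zero]

theorem integral_abs_sum_rpow_le [IsFiniteMeasure μ] {p : ℝ} (hp1 : 1 < p) (hp2 : p ≤ 2)
    (ℱ : ℕ → MeasurableSpace Ω) (X : ℕ → Ω → ℝ) (T : ℕ) (hℱ : ∀ k < T, ℱ k ≤ m0)
    (hS : ∀ k < T, StronglyMeasurable[ℱ k] (fun ω => ∑ i ∈ Finset.range k, X i ω))
    (hX : ∀ k < T, MemLp (X k) (ENNReal.ofReal p) μ)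
    (hX_cond : ∀ k < T, μ[X k | ℱ k] =ᵐ[μ] 0) :
    ∫ ω, |∑ k ∈ Finset.range T, X k ω| ^ p ∂μ
      ≤ 2 ^ (2 - p) * ∑ k ∈ Finset.range T, ∫ ω, |X k ω| ^ p ∂μ := by
  induction T with
  | zero => simp [Real.zero_rpow (by linarith : p ≠ 0)]
  | succ T ih =>
    have hST : MemLp (fun ω => ∑ i ∈ Finset.range T, X i ω) (ENNReal.ofReal p) μ :=
      memLp_finsetSum _ fun i hi => hX i (by grind)
    calc ∫ ω, |∑ k ∈ Finset.range (T + 1), X k ω| ^ p ∂μ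
        = ∫ ω, |∑ k ∈ Finset.range T, X k ω + X T ω| ^ p ∂μ := by
          simp only [Finset.sum_range_succ]
      _ ≤ ∫ ω, |∑ k ∈ Finset.range T, X k ω| ^ p ∂μ + 2 ^ (2 - p) * ∫ ω, |X T ω| ^ p ∂μ :=
          integral_abs_add_rpow_le (hℱ T T.lt_succ_self) hp1 hp2 (hS T T.lt_succ_self) hST
            (hX T T.lt_succ_self) (hX_cond T T.lt_succ_self)
      _ ≤ 2 ^ (2 - p) * ∑ k ∈ Finset.range (T + 1), ∫ ω, |X k ω| ^ p ∂μ := by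
          have hT := ih (fun k hk => hℱ k (by omega)) (fun k hk => hS k (by omega))
            (fun k hk => hX k (by omega)) (fun k hk => hX_cond k (by omega))
          rw [Finset.sum_range_succ, mul_add]
          linarith

lemma memLp_ofReal_of_lintegral_rpow_lt_top {E : Type*} [NormedAddCommGroup E] {p : ℝ}
    (hp : 0 < p) {f : Ω → E} (hf : AEStronglyMeasurable f μ)
    (hf_mom : ∫⁻ ω, (‖f ω‖₊ : ℝ≥0∞) ^ p ∂μ < ⊤) : MemLp f (ENNReal.ofReal p) μ :=
  ⟨hf, (eLpNorm_lt_top_iff_lintegral_rpow_enorm_lt_top (by simpa using hp)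
    ENNReal.ofReal_ne_top).2 (by rw [ENNReal.toReal_ofReal hp.le]; exact hf_mom)⟩

lemma MemLp.lintegral_nnnorm_rpow_eq {p : ℝ} (hp : 0 < p) {f : Ω → ℝ}
    (hf : MemLp f (ENNReal.ofReal p) μ) :
    ∫⁻ ω, (‖f ω‖₊ : ℝ≥0∞) ^ p ∂μ = ENNReal.ofReal (∫ ω, |f ω| ^ p ∂μ) := by
  rw [ofReal_integral_eq_lintegral_ofReal (hf.integrable_abs_rpow hp)
    (ae_of_all _ fun ω => by positivity)]
  congr with ω
  rw [← ENNReal.ofReal_rpow_of_nonneg (abs_nonneg _) hp.le, ← Real.enorm_eq_ofReal_abs,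
    enorm_eq_nnnorm]

lemma iSup_comap_le_of_measurable {X : ℕ → Ω → ℝ} {k : ℕ} (hX : ∀ i < k, Measurable (X i)) :
    ⨆ i ∈ Finset.range k, MeasurableSpace.comap (X i) inferInstance ≤ m0 :=
  iSup₂_le fun i hi => (hX i (Finset.mem_range.1 hi)).comap_le

lemma stronglyMeasurable_sum_range_iSup_comap (X : ℕ → Ω → ℝ) (k : ℕ) :
    StronglyMeasurable[⨆ i ∈ Finset.range k, MeasurableSpace.comap (X i) inferInstance]
      (fun ω => ∑ i ∈ Finset.range k, X i ω) :=
  (Finset.measurable_sum _ fun i hi =>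
    (comap_measurable (X i)).mono (le_iSup₂ (f := fun i (_ : i ∈ Finset.range k) =>
      MeasurableSpace.comap (X i) inferInstance) i hi) le_rfl).stronglyMeasurable

end MeasureTheory

/-- Scalar Burkholder-type inequality for martingale difference sequences. -/
theorem scalar_burkholder
    {Ω : Type*} [m0 : MeasurableSpace Ω] (μ : Measure Ω) [IsProbabilityMeasure μ]
    (p : ℝ) (hp1 : 1 < p) (hp2 : p ≤ 2)
    (T : ℕ) (X : ℕ → Ω → ℝ)
    (hmeas : ∀ k < T, Measurable (X k))
    (hmom : ∀ k < T, ∫⁻ ω, (‖X k ω‖₊ : ℝ≥0∞) ^ p ∂μ < ⊤)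
    (hcond : ∀ k < T,
      μ[X k | ⨆ i ∈ Finset.range k, MeasurableSpace.comap (X i) inferInstance]
        =ᵐ[μ] 0) :
    ∫⁻ ω, (‖∑ k ∈ Finset.range T, X k ω‖₊ : ℝ≥0∞) ^ p ∂μ
      ≤ ENNReal.ofReal ((2 : ℝ) ^ (2 - p)) *
        ∑ k ∈ Finset.range T, ∫⁻ ω, (‖X k ω‖₊ : ℝ≥0∞) ^ p ∂μ := by
  have hp0 : 0 < p := by linarith
  have hX : ∀ k < T, MemLp (X k) (ENNReal.ofReal p) μ := fun k hk =>
    memLp_ofReal_of_lintegral_rpow_lt_top hp0 (hmeas k hk).aestronglyMeasurable (hmom k hk)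
  have hsum : MemLp (fun ω => ∑ k ∈ Finset.range T, X k ω) (ENNReal.ofReal p) μ :=
    memLp_finsetSum _ fun k hk => hX k (Finset.mem_range.1 hk)
  have hburk := integral_abs_sum_rpow_le hp1 hp2 _ X T
    (fun k hk => iSup_comap_le_of_measurable fun i hi => hmeas i (hi.trans hk))
    (fun k _ => stronglyMeasurable_sum_range_iSup_comap X k) hX hcond
  rw [hsum.lintegral_nnnorm_rpow_eq hp0, Finset.sum_congr rfl fun k hk =>
      (hX k (Finset.mem_range.1 hk)).lintegral_nnnorm_rpow_eq hp0,
    ← ENNReal.ofReal_sum_of_nonneg fun k _ => integral_nonneg fun ω => by positivity,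
    ← ENNReal.ofReal_mul (by positivity)]
  exact ENNReal.ofReal_le_ofReal hburk
end

section
/- Let X be an R^d-valued random variable with E[X] = g, E[‖X−g‖^p] ≤ σ^p for p ∈ (1,2], σ ≥ 0, and let D be a random symmetric positive definite matrix (possibly dependent on X) with m·I ⪯ D ⪯ M·I for deterministic 0 < m ≤ M. Suppose ‖g‖ < τ/(2M) and define X̂ = min{1, τ/‖D X‖}·X. Then ‖E[X̂] − g‖ ≤ (M^p/(m·2^{1−p}))·σ^p·τ^{1−p}. -/
/-!
Where `‖D X‖ ≤ τ` nothing is clipped. Elsewhere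
`‖X̂ - X‖ = (1 - τ / ‖D X‖) ‖X‖ ≤ (‖D X‖ - τ) / m`, and since `‖D g‖ ≤ M ‖g‖ < τ / 2`,
the deviation `w = ‖D (X - g)‖` exceeds `‖D X‖ - τ / 2 > τ / 2`; hence
`‖D X‖ - τ ≤ w ≤ (2 w / τ) ^ (p - 1) w ≤ (2 / τ) ^ (p - 1) M ^ p ‖X - g‖ ^ p`.
As `E[X̂] - g = E[X̂ - X]`, integrating this pointwise bound against the moment bound gives the
claim. The bounds `m ‖v‖ ≤ ‖D v‖ ≤ M ‖v‖` come from `m I ⪯ D ⪯ M I` via Cauchy–Schwarz and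
the Rayleigh-quotient formula for the norm of a symmetric operator.
-/

open MeasureTheory Matrix
open scoped ENNReal NNReal

namespace ContinuousLinearMap
variable {E : Type*} [NormedAddCommGroup E] [InnerProductSpace ℝ E]

theorem real_inner_map_self_le_of_le {S T : E →L[ℝ] E} (h : S ≤ T) (x : E) :
    inner ℝ (S x) x ≤ inner ℝ (T x) x := by
  have := ((le_def S T).1 h).inner_nonneg_left x
  rwa [_root_.sub_apply, inner_sub_left, sub_nonneg] at this

theorem real_inner_smul_one_self (m : ℝ) (x : E) :
    inner ℝ ((m • (1 : E →L[ℝ] E)) x) x = m * ‖x‖ ^ 2 := by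
  rw [_root_.smul_apply, one_apply_eq_self, real_inner_smul_left, real_inner_self_eq_norm_sq]

theorem mul_norm_le_norm_apply_of_smul_one_le {T : E →L[ℝ] E} {m : ℝ} (h : m • 1 ≤ T)
    (x : E) : m * ‖x‖ ≤ ‖T x‖ := by
  have hmx := real_inner_smul_one_self m x ▸ real_inner_map_self_le_of_le h x
  have hcs := real_inner_le_norm (T x) x
  rcases (norm_nonneg x).eq_or_lt with hx | hx
  · rw [← hx, mul_zero]
    exact norm_nonneg _
  · nlinarith

theorem norm_le_of_nonneg_of_le_smul_one {T : E →L[ℝ] E} {M : ℝ} (hM : 0 ≤ M) (h0 : 0 ≤ T)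
    (h : T ≤ M • 1) : ‖T‖ ≤ M := by
  rw [T.norm_eq_iSup_rayleighQuotient ((nonneg_iff_isPositive T).1 h0).isSymmetric]
  refine ciSup_le fun x => ?_
  have h0x := ((nonneg_iff_isPositive T).1 h0).inner_nonneg_left x
  have hMx := real_inner_smul_one_self M x ▸ real_inner_map_self_le_of_le h x
  rw [rayleighQuotient, reApplyInnerSelf_apply, RCLike.re_to_real, abs_div,
    abs_of_nonneg h0x, abs_of_nonneg (sq_nonneg _)]
  exact div_le_of_le_mul₀ (sq_nonneg _) hM hMx

theorem norm_apply_le_of_smul_one_le_of_le_smul_one {T : E →L[ℝ] E} {m M : ℝ} (hm : 0 ≤ m)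
    (hmM : m ≤ M) (hlow : m • 1 ≤ T) (hup : T ≤ M • 1) (x : E) : ‖T x‖ ≤ M * ‖x‖ := by
  have h0 : 0 ≤ T :=
    le_trans ((nonneg_iff_isPositive _).2 (isPositive_one.smul_of_nonneg hm)) hlow
  exact T.le_of_opNorm_le (norm_le_of_nonneg_of_le_smul_one (hm.trans hmM) h0 hup) x

end ContinuousLinearMap

namespace Matrix
variable {n : Type*} [Fintype n] [DecidableEq n] {A : Matrix n n ℝ} {m M : ℝ}

theorem toEuclideanCLM_le_toEuclideanCLM_iff {B : Matrix n n ℝ} :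
    toEuclideanCLM (n := n) (𝕜 := ℝ) A ≤ toEuclideanCLM (n := n) (𝕜 := ℝ) B ↔
      (B - A).PosSemidef := by
  rw [ContinuousLinearMap.le_def, ← map_sub]
  exact isPositive_toEuclideanLin_iff

theorem smul_one_le_toEuclideanCLM (h : (A - m • 1).PosSemidef) :
    m • 1 ≤ toEuclideanCLM (n := n) (𝕜 := ℝ) A := by
  simpa using toEuclideanCLM_le_toEuclideanCLM_iff.2 h

theorem toEuclideanCLM_le_smul_one (h : (M • 1 - A).PosSemidef) :
    toEuclideanCLM (n := n) (𝕜 := ℝ) A ≤ M • 1 := by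
  simpa using toEuclideanCLM_le_toEuclideanCLM_iff.2 h

theorem mul_norm_le_norm_toEuclideanLin (h : (A - m • 1).PosSemidef) (x : EuclideanSpace ℝ n) :
    m * ‖x‖ ≤ ‖toEuclideanLin A x‖ :=
  (toEuclideanCLM (n := n) (𝕜 := ℝ) A).mul_norm_le_norm_apply_of_smul_one_le
    (smul_one_le_toEuclideanCLM h) x

theorem norm_toEuclideanLin_le (hm : 0 ≤ m) (hmM : m ≤ M) (hlow : (A - m • 1).PosSemidef)
    (hup : (M • 1 - A).PosSemidef) (x : EuclideanSpace ℝ n) :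
    ‖toEuclideanLin A x‖ ≤ M * ‖x‖ :=
  (toEuclideanCLM (n := n) (𝕜 := ℝ) A).norm_apply_le_of_smul_one_le_of_le_smul_one hm hmM
    (smul_one_le_toEuclideanCLM hlow) (toEuclideanCLM_le_smul_one hup) x

end Matrix

theorem le_rpow_mul_of_half_le {τ w p : ℝ} (hτ : 0 < τ) (hp : 1 ≤ p) (hw : τ / 2 ≤ w) :
    w ≤ τ ^ (1 - p) / 2 ^ (1 - p) * w ^ p := by
  have hw0 : 0 < w := by linarith
  have hratio : 1 ≤ (2 * w / τ) ^ (p - 1) :=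
    Real.one_le_rpow ((one_le_div hτ).2 (by linarith)) (by linarith)
  calc w = 1 * w := (one_mul w).symm
    _ ≤ (2 * w / τ) ^ (p - 1) * w := by gcongr
    _ = τ ^ (1 - p) / 2 ^ (1 - p) * w ^ p := by
      rw [Real.div_rpow (by positivity) hτ.le, Real.mul_rpow zero_le_two hw0.le,
        show 1 - p = -(p - 1) by ring, Real.rpow_neg hτ.le, Real.rpow_neg zero_le_two,
        Real.rpow_sub_one hw0.ne' p]
      field_simp

section Clipping
variable {E F : Type*} [NormedAddCommGroup E] [NormedSpace ℝ E] [NormedAddCommGroup F]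
  [NormedSpace ℝ F]

theorem norm_min_one_div_smul_le {τ r : ℝ} (hτ : 0 ≤ τ) (hr : 0 ≤ r) (x : E) :
    ‖min 1 (τ / r) • x‖ ≤ ‖x‖ := by
  rw [norm_smul, Real.norm_of_nonneg (le_min zero_le_one (div_nonneg hτ hr))]
  exact mul_le_of_le_one_left (norm_nonneg x) (min_le_left _ _)

theorem norm_div_smul_sub_self_le {τ r m : ℝ} (hτ : 0 < τ) (hr : τ ≤ r) (hm : 0 < m)
    {x : E} (hx : m * ‖x‖ ≤ r) : ‖(τ / r) • x - x‖ ≤ (r - τ) / m := by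
  have hr0 : 0 < r := hτ.trans_le hr
  have hx' : ‖x‖ ≤ r / m := by rw [le_div_iff₀ hm, mul_comm]; exact hx
  calc ‖(τ / r) • x - x‖ = (1 - τ / r) * ‖x‖ := by
        rw [show (τ / r) • x - x = (τ / r - 1) • x by rw [sub_smul, one_smul], norm_smul,
          Real.norm_of_nonpos, neg_sub]
        rw [sub_nonpos, div_le_one hr0]; exact hr
    _ ≤ (1 - τ / r) * (r / m) := by
        gcongr
        rw [sub_nonneg, div_le_one hr0]; exact hr
    _ = (r - τ) / m := by field_simp

theorem norm_clip_sub_self_le (T : E →ₗ[ℝ] F) {m M τ p : ℝ} (hm : 0 < m) (hM : 0 ≤ M)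
    (hτ : 0 < τ) (hp : 1 ≤ p) (hlow : ∀ v, m * ‖v‖ ≤ ‖T v‖) (hup : ∀ v, ‖T v‖ ≤ M * ‖v‖)
    {g : E} (hg : ‖T g‖ ≤ τ / 2) (x : E) :
    ‖min 1 (τ / ‖T x‖) • x - x‖ ≤ M ^ p / (m * 2 ^ (1 - p)) * τ ^ (1 - p) * ‖x - g‖ ^ p := by
  rcases le_or_gt ‖T x‖ τ with hle | hgt
  · suffices min 1 (τ / ‖T x‖) • x = x by rw [this, sub_self, norm_zero]; positivity
    rcases (norm_nonneg (T x)).eq_or_lt with h0 | hpos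
    · -- `τ / 0 = 0`, so this case needs `x = 0`
      have hx : ‖x‖ = 0 := by nlinarith [hlow x, norm_nonneg x]
      rw [norm_eq_zero.1 hx, smul_zero]
    · rw [min_eq_left ((one_le_div hpos).2 hle), one_smul]
  have hw : ‖T x‖ - τ / 2 ≤ ‖T (x - g)‖ := by
    rw [map_sub]; linarith [norm_sub_norm_le (T x) (T g)]
  calc ‖min 1 (τ / ‖T x‖) • x - x‖ = ‖(τ / ‖T x‖) • x - x‖ := by
        rw [min_eq_right ((div_le_one (hτ.trans hgt)).2 hgt.le)]
    _ ≤ (‖T x‖ - τ) / m := norm_div_smul_sub_self_le hτ hgt.le hm (hlow x)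
    _ ≤ ‖T (x - g)‖ / m := by gcongr; linarith
    _ ≤ τ ^ (1 - p) / 2 ^ (1 - p) * ‖T (x - g)‖ ^ p / m := by
        gcongr; exact le_rpow_mul_of_half_le hτ hp (by linarith)
    _ ≤ τ ^ (1 - p) / 2 ^ (1 - p) * (M * ‖x - g‖) ^ p / m := by
        gcongr; exact hup _
    _ = M ^ p / (m * 2 ^ (1 - p)) * τ ^ (1 - p) * ‖x - g‖ ^ p := by
        rw [Real.mul_rpow hM (norm_nonneg _)]; field_simp

end Clipping

theorem norm_integral_sub_integral_le_of_norm_sub_le {Ω E : Type*} [MeasurableSpace Ω]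
    {μ : Measure Ω} [NormedAddCommGroup E] [NormedSpace ℝ E] {X Y : Ω → E}
    (hX : Integrable X μ) (hY : Integrable Y μ) {g : E} {C p s : ℝ} (hC : 0 ≤ C) (hs : 0 ≤ s)
    (hp : 0 ≤ p) (hYX : ∀ ω, ‖Y ω - X ω‖ ≤ C * ‖X ω - g‖ ^ p)
    (hmom : ∫⁻ ω, ‖X ω - g‖ₑ ^ p ∂μ ≤ ENNReal.ofReal s) :
    ‖∫ ω, Y ω ∂μ - ∫ ω, X ω ∂μ‖ ≤ C * s := by
  rw [← integral_sub hY hX, ← ENNReal.ofReal_le_ofReal_iff (by positivity), ofReal_norm]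
  calc ‖∫ ω, (Y ω - X ω) ∂μ‖ₑ ≤ ∫⁻ ω, ‖Y ω - X ω‖ₑ ∂μ := enorm_integral_le_lintegral_enorm _
    _ ≤ ∫⁻ ω, ENNReal.ofReal C * ‖X ω - g‖ₑ ^ p ∂μ := by
        refine lintegral_mono fun ω => ?_
        rw [← ofReal_norm, ← ofReal_norm, ENNReal.ofReal_rpow_of_nonneg (norm_nonneg _) hp,
          ← ENNReal.ofReal_mul hC]
        exact ENNReal.ofReal_le_ofReal (hYX ω)
    _ = ENNReal.ofReal C * ∫⁻ ω, ‖X ω - g‖ₑ ^ p ∂μ :=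
        lintegral_const_mul' _ _ ENNReal.ofReal_ne_top
    _ ≤ ENNReal.ofReal (C * s) := by
        rw [ENNReal.ofReal_mul hC]; gcongr

theorem precond_clip_bias_bound_general
    {Ω : Type*} [m0 : MeasurableSpace Ω] (μ : Measure Ω) [IsProbabilityMeasure μ]
    (d : ℕ) (p σ τ m M : ℝ) (hp1 : 1 < p) (hσ : 0 ≤ σ) (hτ : 0 < τ)
    (hm : 0 < m) (hmM : m ≤ M)
    (X : Ω → EuclideanSpace ℝ (Fin d))
    (hXint : Integrable X μ)
    (g : EuclideanSpace ℝ (Fin d)) (hmean : ∫ ω, X ω ∂μ = g)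
    (hmom : ∫⁻ ω, (‖X ω - g‖₊ : ℝ≥0∞) ^ p ∂μ ≤ ENNReal.ofReal (σ ^ p))
    (D : Ω → Matrix (Fin d) (Fin d) ℝ)
    (hDlow : ∀ ω, (D ω - m • (1 : Matrix (Fin d) (Fin d) ℝ)).PosSemidef)
    (hDup : ∀ ω, ((M • (1 : Matrix (Fin d) (Fin d) ℝ)) - D ω).PosSemidef)
    (hg : ‖g‖ < τ / (2 * M))
    (Xhat : Ω → EuclideanSpace ℝ (Fin d))
    (hXhat : ∀ ω, Xhat ω = min 1 (τ / ‖Matrix.toEuclideanLin (D ω) (X ω)‖) • X ω)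
    (hXhatmeas : AEStronglyMeasurable Xhat μ) :
    ‖(∫ ω, Xhat ω ∂μ) - g‖ ≤ (M ^ p / (m * 2 ^ (1 - p))) * σ ^ p * τ ^ (1 - p) := by
  have hM : 0 < M := hm.trans_le hmM
  have hDg ω : ‖toEuclideanLin (D ω) g‖ ≤ τ / 2 := by
    calc ‖toEuclideanLin (D ω) g‖ ≤ M * ‖g‖ :=
          norm_toEuclideanLin_le hm.le hmM (hDlow ω) (hDup ω) g
      _ ≤ τ / 2 := by rw [lt_div_iff₀ (by positivity)] at hg; linarith
  have hXhatint : Integrable Xhat μ := hXint.mono hXhatmeas <| .of_forall fun ω => by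
    rw [hXhat ω]; exact norm_min_one_div_smul_le hτ.le (norm_nonneg _) _
  rw [← hmean, mul_right_comm]
  refine norm_integral_sub_integral_le_of_norm_sub_le hXint hXhatint (by positivity)
    (by positivity) (by linarith) (fun ω => ?_) hmom
  rw [hXhat ω]
  exact norm_clip_sub_self_le (toEuclideanLin (D ω)) hm hM.le hτ hp1.le
    (mul_norm_le_norm_toEuclideanLin (hDlow ω))
    (norm_toEuclideanLin_le hm.le hmM (hDlow ω) (hDup ω)) (hDg ω) (X ω)

/-- Bias bound for preconditioning-then-clipping. -/
theorem precond_clip_bias_bound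
    {Ω : Type*} [m0 : MeasurableSpace Ω] (μ : Measure Ω) [IsProbabilityMeasure μ]
    (d : ℕ) (p σ τ m M : ℝ) (hp1 : 1 < p) (hp2 : p ≤ 2) (hσ : 0 ≤ σ) (hτ : 0 < τ)
    (hm : 0 < m) (hmM : m ≤ M)
    (X : Ω → EuclideanSpace ℝ (Fin d))
    (hXmeas : AEStronglyMeasurable X μ) (hXint : Integrable X μ)
    (g : EuclideanSpace ℝ (Fin d)) (hmean : ∫ ω, X ω ∂μ = g)
    (hmom : ∫⁻ ω, (‖X ω - g‖₊ : ℝ≥0∞) ^ p ∂μ ≤ ENNReal.ofReal (σ ^ p))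
    (D : Ω → Matrix (Fin d) (Fin d) ℝ)
    (hDpos : ∀ ω, (D ω).PosDef)
    (hDlow : ∀ ω, (D ω - m • (1 : Matrix (Fin d) (Fin d) ℝ)).PosSemidef)
    (hDup : ∀ ω, ((M • (1 : Matrix (Fin d) (Fin d) ℝ)) - D ω).PosSemidef)
    (hg : ‖g‖ < τ / (2 * M))
    (Xhat : Ω → EuclideanSpace ℝ (Fin d))
    (hXhat : ∀ ω, Xhat ω = min 1 (τ / ‖Matrix.toEuclideanLin (D ω) (X ω)‖) • X ω)
    (hXhatmeas : AEStronglyMeasurable Xhat μ) :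
    ‖(∫ ω, Xhat ω ∂μ) - g‖ ≤ (M ^ p / (m * 2 ^ (1 - p))) * σ ^ p * τ ^ (1 - p) :=
  precond_clip_bias_bound_general (m0 := m0) μ d p σ τ m M hp1 hσ hτ hm hmM X hXint g hmean hmom D
    hDlow hDup hg Xhat hXhat hXhatmeas
end
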